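/- Let C* > 0, let α : ℝ → ℝ be a differentiable, strictly increasing, positive function, and let S, I : [t*, ∞) → ℝ be twice differentiable functions with S(t) > 0 and I(t) > 0 for all t ≥ t*, satisfying S' = -α(I)·I·S and I' = (α(I)·S - C*)·I on [t*, ∞), and I'(t*) = 0. Then for every t₂ > t*, the number ε := C* - α(I(t₂))·S(t₂) is strictly positive and I(t) ≤ I(t₂)·exp(-ε·(t - t₂)) for all t ≥ t₂. -/

import Mathlib

/-!
Put `u = α(I)·S`. At `t*` we have `u = C*`, and whenever `u = C*` the `I`-term of `u'` vanishes,
leaving `u' = -α(I)²·I·S < 0`; so `u` can never climb back to the level `C*` and `u < C*`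
after `t*`. Hence `I' = (u - C*)·I ≤ 0` and `S' ≤ 0`, so `u` is antitone after `t*` since `α`
is increasing. For `t ≥ t₂` this gives `I' ≤ -(C* - u(t₂))·I`, and the exponential bound follows
because `I(t)·exp((C* - u(t₂))(t - t₂))` is antitone.
-/

open Set Filter Topology

theorem antitoneOn_Ici_of_hasDerivAt_nonpos {f f' : ℝ → ℝ} {a : ℝ}
    (hf : ∀ t ≥ a, HasDerivAt f (f' t) t) (hf' : ∀ t > a, f' t ≤ 0) : AntitoneOn f (Ici a) :=
  antitoneOn_of_hasDerivWithinAt_nonpos (convex_Ici a)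
    (fun t ht => (hf t ht).continuousAt.continuousWithinAt)
    (fun t ht => (hf t (interior_subset ht)).hasDerivWithinAt)
    (fun t ht => hf' t (by rwa [interior_Ici] at ht))

theorem lt_of_hasDerivAt_neg_of_eq {f f' : ℝ → ℝ} {a c : ℝ}
    (hf : ∀ t ≥ a, HasDerivAt f (f' t) t) (ha : f a ≤ c)
    (hlevel : ∀ t ≥ a, f t = c → f' t < 0) : ∀ t > a, f t < c := by
  have hle : ∀ t ≥ a, f t ≤ c := fun t ht =>
    image_le_of_deriv_right_lt_deriv_boundary' (B := fun _ => c) (B' := fun _ => 0)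
      (fun s hs => (hf s hs.1).continuousAt.continuousWithinAt)
      (fun s hs => (hf s hs.1).hasDerivWithinAt) ha continuousOn_const
      (fun _ _ => hasDerivWithinAt_const _ _ _) (fun s hs => hlevel s hs.1) ⟨ht, le_rfl⟩
  intro t ht
  refine (hle t ht.le).lt_of_ne fun heq => (hlevel t ht.le heq).ne ?_
  have hmax : IsLocalMax f t :=
    mem_of_superset (Ioi_mem_nhds ht) fun s hs => heq ▸ hle s (le_of_lt hs)
  exact hmax.hasDerivAt_eq_zero (hf t ht.le)

theorem le_mul_exp_of_hasDerivAt_le_neg_mul {f f' : ℝ → ℝ} {a k : ℝ}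
    (hf : ∀ t ≥ a, HasDerivAt f (f' t) t) (hbound : ∀ t > a, f' t ≤ -k * f t) :
    ∀ t ≥ a, f t ≤ f a * Real.exp (-k * (t - a)) := by
  set g : ℝ → ℝ := fun t => f t * Real.exp (k * (t - a))
  have hg : ∀ t ≥ a, HasDerivAt g (f' t * Real.exp (k * (t - a))
      + f t * (Real.exp (k * (t - a)) * k)) t := fun t ht =>
    (hf t ht).mul ((((hasDerivAt_id t).sub_const a).const_mul k).exp.congr_deriv (by simp))
  have hg_anti : AntitoneOn g (Ici a) := by
    refine antitoneOn_Ici_of_hasDerivAt_nonpos hg fun t ht => ?_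
    have hexp := Real.exp_pos (k * (t - a))
    nlinarith [hbound t ht]
  intro t ht
  have hgt : g t ≤ f a := by simpa [g] using hg_anti self_mem_Ici ht ht
  calc f t = g t * Real.exp (-k * (t - a)) := by
        rw [mul_assoc, ← Real.exp_add, neg_mul, add_neg_cancel, Real.exp_zero, mul_one]
    _ ≤ f a * Real.exp (-k * (t - a)) := by gcongr

theorem fashion_rate_lt (Cstar tstar : ℝ) (α : ℝ → ℝ) (hαdiff : Differentiable ℝ α)
    (hαpos : ∀ x, 0 < α x) (S I : ℝ → ℝ)
    (hSpos : ∀ t ≥ tstar, 0 < S t) (hIpos : ∀ t ≥ tstar, 0 < I t)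
    (hS : ∀ t ≥ tstar, HasDerivAt S (-(α (I t)) * I t * S t) t)
    (hI : ∀ t ≥ tstar, HasDerivAt I ((α (I t) * S t - Cstar) * I t) t)
    (hIc : deriv I tstar = 0) :
    ∀ t > tstar, α (I t) * S t < Cstar := by
  have hu : ∀ t ≥ tstar, HasDerivAt (fun t => α (I t) * S t)
      (deriv α (I t) * ((α (I t) * S t - Cstar) * I t) * S t
        + α (I t) * (-(α (I t)) * I t * S t)) t := fun t ht =>
    ((hαdiff (I t)).hasDerivAt.comp t (hI t ht)).mul (hS t ht)
  have hstart : α (I tstar) * S tstar = Cstar := by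
    have h0 : (α (I tstar) * S tstar - Cstar) * I tstar = 0 := (hI tstar le_rfl).deriv ▸ hIc
    exact sub_eq_zero.1 ((mul_eq_zero.1 h0).resolve_right (hIpos tstar le_rfl).ne')
  refine lt_of_hasDerivAt_neg_of_eq hu hstart.le fun t ht heq => ?_
  rw [heq, sub_self, zero_mul, mul_zero, zero_mul, zero_add]
  have := mul_pos (mul_pos (mul_pos (hαpos (I t)) (hαpos (I t))) (hIpos t ht)) (hSpos t ht)
  linarith

theorem fashion_exponential_upper_bound_general (Cstar tstar : ℝ)
    (α : ℝ → ℝ) (hαdiff : Differentiable ℝ α) (hαmono : StrictMono α)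
    (hαpos : ∀ x, 0 < α x)
    (S I : ℝ → ℝ)
    (hSpos : ∀ t ≥ tstar, 0 < S t) (hIpos : ∀ t ≥ tstar, 0 < I t)
    (hS : ∀ t ≥ tstar, HasDerivAt S (-(α (I t)) * I t * S t) t)
    (hI : ∀ t ≥ tstar, HasDerivAt I ((α (I t) * S t - Cstar) * I t) t)
    (hIc : deriv I tstar = 0) :
    ∀ t₂ > tstar,
      0 < Cstar - α (I t₂) * S t₂ ∧
      ∀ t ≥ t₂, I t ≤ I t₂ * Real.exp (-(Cstar - α (I t₂) * S t₂) * (t - t₂)) := by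
  have hrate := fashion_rate_lt Cstar tstar α hαdiff hαpos S I hSpos hIpos hS hI hIc
  have hS_anti : AntitoneOn S (Ici tstar) := antitoneOn_Ici_of_hasDerivAt_nonpos hS fun t ht => by
    have := mul_pos (mul_pos (hαpos (I t)) (hIpos t ht.le)) (hSpos t ht.le)
    linarith
  have hI_anti : AntitoneOn I (Ici tstar) := antitoneOn_Ici_of_hasDerivAt_nonpos hI fun t ht =>
    mul_nonpos_of_nonpos_of_nonneg (sub_nonpos.2 (hrate t ht).le) (hIpos t ht.le).le
  intro t₂ ht₂
  refine ⟨sub_pos.2 (hrate t₂ ht₂), ?_⟩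
  refine le_mul_exp_of_hasDerivAt_le_neg_mul (fun t ht => hI t (ht₂.le.trans ht)) fun t ht => ?_
  have ht' : tstar ≤ t := ht₂.le.trans ht.le
  have hrate_le : α (I t) * S t ≤ α (I t₂) * S t₂ :=
    mul_le_mul (hαmono.monotone (hI_anti ht₂.le ht' ht.le)) (hS_anti ht₂.le ht' ht.le)
      (hSpos t ht').le (hαpos _).le
  nlinarith [hIpos t ht']

/-- Exponential upper bound of Theorem 3.6, part (2) (the Fashion case p = 0):
under the model S' = -α(I)·I·S, I' = (α(I)·S - C*)·I with I'(t*) = 0, for every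
t₂ > t* the number ε = C* - α(I(t₂))·S(t₂) is positive and
I(t) ≤ I(t₂)·exp(-ε·(t - t₂)) for all t ≥ t₂. -/
theorem fashion_exponential_upper_bound (Cstar tstar : ℝ) (hC : 0 < Cstar)
    (α : ℝ → ℝ) (hαdiff : Differentiable ℝ α) (hαmono : StrictMono α)
    (hαpos : ∀ x, 0 < α x)
    (S I : ℝ → ℝ)
    (hSpos : ∀ t ≥ tstar, 0 < S t) (hIpos : ∀ t ≥ tstar, 0 < I t)
    (hS : ∀ t ≥ tstar, HasDerivAt S (-(α (I t)) * I t * S t) t)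
    (hI : ∀ t ≥ tstar, HasDerivAt I ((α (I t) * S t - Cstar) * I t) t)
    (hIc : deriv I tstar = 0) :
    ∀ t₂ > tstar,
      0 < Cstar - α (I t₂) * S t₂ ∧
      ∀ t ≥ t₂, I t ≤ I t₂ * Real.exp (-(Cstar - α (I t₂) * S t₂) * (t - t₂)) :=
  fashion_exponential_upper_bound_general Cstar tstar α hαdiff hαmono hαpos S I hSpos hIpos hS hI
    hIc
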